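/- arXiv:1710.06698 — 2 statements merged into one kernel-verified Lean document; each statement's English description precedes it below -/
import Mathlib

section
/- Let γ : ℝ → ℝ be differentiable and nondecreasing with γ(x₀) = 0 for some x₀, and assume |γ'(s)| ≤ M(1 + |s|⁵) + K for all s and constants M, K > 0. For λ ∈ (0,1), let γ_λ denote the Yosida approximation, so γ_λ(r) = γ(r_λ) where r_λ + λγ(r_λ) = r. Then there exists a constant C, independent of λ, such that |γ_λ'(r)| ≤ C(1 + |r|⁵) for all r ∈ ℝ, where γ_λ'(r) = γ'(r_λ)·r_λ'(r). -/
private lemma mono_deriv_nonneg (γ : ℝ → ℝ) (hdiff : Differentiable ℝ γ)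
    (hmono : Monotone γ) (x : ℝ) : 0 ≤ deriv γ x := by
  have h := (hdiff x).hasDerivAt
  rw [hasDerivAt_iff_tendsto_slope] at h
  refine ge_of_tendsto h ?_
  filter_upwards [self_mem_nhdsWithin] with y hy
  rw [slope_def_field]
  rcases lt_or_gt_of_ne (Ne.symm hy) with hxy | hxy
  · exact div_nonneg (sub_nonneg.2 (hmono hxy.le)) (sub_nonneg.2 hxy.le)
  · exact div_nonneg_iff.2 (Or.inr ⟨sub_nonpos.2 (hmono hxy.le), sub_nonpos.2 hxy.le⟩)

theorem yosida_deriv_quintic_bound (γ : ℝ → ℝ) (hdiff : Differentiable ℝ γ)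
    (hmono : Monotone γ) (x₀ : ℝ) (hx₀ : γ x₀ = 0) (M K : ℝ) (hM : 0 < M) (hK : 0 < K)
    (hgrowth : ∀ s : ℝ, |deriv γ s| ≤ M * (1 + |s| ^ 5) + K)
    (J : ℝ → ℝ → ℝ)
    (hres : ∀ lam ∈ Set.Ioo (0:ℝ) 1, ∀ r : ℝ, J lam r + lam * γ (J lam r) = r)
    (hJdiff : ∀ lam ∈ Set.Ioo (0:ℝ) 1, Differentiable ℝ (J lam)) :
    ∃ C > 0, ∀ lam ∈ Set.Ioo (0:ℝ) 1, ∀ r : ℝ,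
      |deriv γ (J lam r) * deriv (J lam) r| ≤ C * (1 + |r| ^ 5) := by
  refine ⟨33 * M + 32 * M * |x₀| ^ 5 + K, by positivity, ?_⟩
  intro lam hlam r
  obtain ⟨hlam0, hlam1⟩ := hlam
  set u := J lam r with hu
  have hb : 0 ≤ deriv γ u := mono_deriv_nonneg γ hdiff hmono u
  -- derivative identity
  have hJd : HasDerivAt (J lam) (deriv (J lam) r) r :=
    ((hJdiff lam ⟨hlam0, hlam1⟩) r).hasDerivAt
  have hγd : HasDerivAt γ (deriv γ u) u := (hdiff u).hasDerivAt
  have hcomp : HasDerivAt (fun x => J lam x + lam * γ (J lam x))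
      (deriv (J lam) r + lam * (deriv γ u * deriv (J lam) r)) r :=
    hJd.add (((hγd.comp r hJd)).const_mul lam)
  have hid : HasDerivAt (fun x => J lam x + lam * γ (J lam x)) 1 r := by
    have : (fun x => J lam x + lam * γ (J lam x)) = fun x => x := by
      funext x; exact hres lam ⟨hlam0, hlam1⟩ x
    rw [this]; exact hasDerivAt_id r
  have hkey : deriv (J lam) r + lam * (deriv γ u * deriv (J lam) r) = 1 :=
    hcomp.unique hid
  -- deriv J ∈ [0,1]
  have hpos : 0 < 1 + lam * deriv γ u := by positivity
  have hJval : deriv (J lam) r = 1 / (1 + lam * deriv γ u) := by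
    field_simp
    nlinarith [hkey]
  have hJ0 : 0 ≤ deriv (J lam) r := by rw [hJval]; positivity
  have hJ1 : deriv (J lam) r ≤ 1 := by
    rw [hJval, div_le_one hpos]; nlinarith
  -- bound on |u|
  have hmonoF : StrictMono (fun s => s + lam * γ s) :=
    strictMono_id.add_monotone (hmono.const_mul hlam0.le)
  have hFu : u + lam * γ u = r := hres lam ⟨hlam0, hlam1⟩ r
  have hub : |u| ≤ |r| + |x₀| := by
    rcases le_total x₀ u with h1 | h1
    · have hγu : 0 ≤ γ u := hx₀ ▸ hmono h1
      have hur : u ≤ r := by nlinarith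
      rw [abs_le]; constructor
      · have := neg_abs_le x₀; linarith [abs_nonneg r]
      · linarith [le_abs_self r, abs_nonneg x₀]
    · have hγu : γ u ≤ 0 := hx₀ ▸ hmono h1
      have hur : r ≤ u := by nlinarith
      rw [abs_le]; constructor
      · linarith [neg_abs_le r, abs_nonneg x₀]
      · linarith [le_abs_self x₀, abs_nonneg r]
  -- growth bound
  have hg := hgrowth u
  have hu5 : |u| ^ 5 ≤ (|r| + |x₀|) ^ 5 :=
    pow_le_pow_left₀ (abs_nonneg u) hub 5
  have hpow : (|r| + |x₀|) ^ 5 ≤ 32 * (|r| ^ 5 + |x₀| ^ 5) := by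
    have ha : 0 ≤ |r| := abs_nonneg r
    have hb' : 0 ≤ |x₀| := abs_nonneg x₀
    set m := max |r| |x₀| with hm
    have h2 : |r| + |x₀| ≤ 2 * m := by
      have := le_max_left |r| |x₀|; have := le_max_right |r| |x₀|; linarith
    have hm0 : 0 ≤ m := le_trans ha (le_max_left _ _)
    have h3 : (|r| + |x₀|) ^ 5 ≤ (2 * m) ^ 5 :=
      pow_le_pow_left₀ (by linarith) h2 5
    have h4 : m ^ 5 ≤ |r| ^ 5 + |x₀| ^ 5 := by
      rcases max_cases |r| |x₀| with ⟨he, _⟩ | ⟨he, _⟩ <;> rw [hm, he] <;>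
        nlinarith [pow_nonneg ha 5, pow_nonneg hb' 5]
    calc (|r| + |x₀|) ^ 5 ≤ (2 * m) ^ 5 := h3
      _ = 32 * m ^ 5 := by ring
      _ ≤ 32 * (|r| ^ 5 + |x₀| ^ 5) := by linarith
  have h1 : |deriv γ u * deriv (J lam) r| ≤ |deriv γ u| := by
    rw [abs_mul]
    calc |deriv γ u| * |deriv (J lam) r| ≤ |deriv γ u| * 1 := by
          apply mul_le_mul_of_nonneg_left _ (abs_nonneg _)
          rw [abs_of_nonneg hJ0]; exact hJ1
      _ = |deriv γ u| := mul_one _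
  have h5 : 0 ≤ |r| ^ 5 := by positivity
  calc |deriv γ u * deriv (J lam) r| ≤ |deriv γ u| := h1
    _ ≤ M * (1 + |u| ^ 5) + K := hg
    _ ≤ M * (1 + 32 * (|r| ^ 5 + |x₀| ^ 5)) + K := by nlinarith
    _ ≤ (33 * M + 32 * M * |x₀| ^ 5 + K) * (1 + |r| ^ 5) := by
          have hy5 : 0 ≤ |x₀| ^ 5 := pow_nonneg (abs_nonneg x₀) 5
          nlinarith [mul_nonneg hM.le h5, mul_nonneg hK.le h5,
            mul_nonneg (mul_nonneg hM.le hy5) h5, mul_nonneg hM.le hy5]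
end

section
/- Let β : ℝ → ℝ be nondecreasing and let (v_λ) be a family of measurable functions on a finite measure space converging weakly in L² to v, with β(v_λ) converging weakly in L² to ξ, and suppose limsup_{λ→0} ∫ β(v_λ) v_λ ≤ ∫ ξ v. If β is maximal monotone (continuous nondecreasing), then ξ = β(v) almost everywhere. -/
/-! Minty's trick. Put `w := (I + β)⁻¹ (v + ξ)`, so that `β ∘ w = v + ξ - w` lies in `L²`.
Monotonicity of `β` gives `0 ≤ ⟪β ∘ v_λ - β ∘ w, v_λ - w⟫`. Weakly convergent families are
eventually bounded (uniform boundedness, applied along a sequence), so the pairing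
`⟪β ∘ v_λ, v_λ⟫` has a genuine limsup and the limsup hypothesis yields
`0 ≤ ⟪ξ - β ∘ w, v - w⟫ = -‖v - w‖²`. Hence `v = w`, and then `ξ = v + ξ - w = β ∘ v`. -/

open MeasureTheory Filter Topology
open scoped RealInnerProductSpace

section UniformBoundedness

variable {E F 𝕜 𝕜₂ : Type*} [SeminormedAddCommGroup E] [SeminormedAddCommGroup F]
  [NontriviallyNormedField 𝕜] [NontriviallyNormedField 𝕜₂] [NormedSpace 𝕜 E] [NormedSpace 𝕜₂ F]
  {σ₁₂ : 𝕜 →+* 𝕜₂} [RingHomIsometric σ₁₂] [CompleteSpace E]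
  {ι : Type*} {l : Filter ι} [l.IsCountablyGenerated]

theorem banach_steinhaus_isBoundedUnder {g : ι → E →SL[σ₁₂] F}
    (h : ∀ x, IsBoundedUnder (· ≤ ·) l fun i ↦ ‖g i x‖) :
    IsBoundedUnder (· ≤ ·) l fun i ↦ ‖g i‖ := by
  by_contra hunbdd
  have : NeBot (atTop ⊓ map (fun i ↦ ‖g i‖) l) := by
    refine ⟨fun hbot ↦ hunbdd ?_⟩
    obtain ⟨s, hs, t, ht, hst⟩ := inf_eq_bot_iff.1 hbot
    obtain ⟨C, hC⟩ := mem_atTop_sets.1 hs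
    refine ⟨C, mem_of_superset ht fun a ha ↦ ?_⟩
    change a ≤ C
    by_contra! hlt
    exact (Set.eq_empty_iff_forall_notMem.1 hst) _ ⟨hC _ hlt.le, ha⟩
  obtain ⟨θ, hθ, hnorm⟩ := exists_seq_comp_tendsto this
  obtain ⟨C, hC⟩ := banach_steinhaus (g := g ∘ θ) fun x ↦ by
    obtain ⟨C, hC⟩ := (hθ.isBoundedUnder_comp (h x)).bddAbove_range
    exact ⟨C, fun n ↦ hC ⟨n, rfl⟩⟩
  exact not_isBoundedUnder_of_tendsto_atTop hnorm
    (isBoundedUnder_of_eventually_le (Eventually.of_forall hC))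

end UniformBoundedness

section WeakConvergence

variable {E : Type*} [NormedAddCommGroup E] [InnerProductSpace ℝ E] [CompleteSpace E]
  {ι : Type*} {l : Filter ι} [l.IsCountablyGenerated] {u b : ι → E} {U B : E}

theorem isBoundedUnder_norm_of_tendsto_inner {φ : E → ℝ}
    (hu : ∀ g, Tendsto (fun i ↦ ⟪u i, g⟫) l (𝓝 (φ g))) :
    IsBoundedUnder (· ≤ ·) l fun i ↦ ‖u i‖ := by
  simpa only [innerSL_apply_norm] using
    banach_steinhaus_isBoundedUnder (g := fun i ↦ innerSL ℝ (u i)) fun g ↦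
      (hu g).norm.isBoundedUnder_le

theorem isBoundedUnder_inner_of_tendsto_inner {φ ψ : E → ℝ}
    (hu : ∀ g, Tendsto (fun i ↦ ⟪u i, g⟫) l (𝓝 (φ g)))
    (hb : ∀ g, Tendsto (fun i ↦ ⟪b i, g⟫) l (𝓝 (ψ g))) :
    IsBoundedUnder (· ≤ ·) l fun i ↦ ⟪b i, u i⟫ := by
  obtain ⟨Cu, hCu⟩ := isBoundedUnder_norm_of_tendsto_inner hu
  obtain ⟨Cb, hCb⟩ := isBoundedUnder_norm_of_tendsto_inner hb
  refine isBoundedUnder_of_eventually_le (a := Cb * Cu) ?_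
  filter_upwards [hCu, hCb] with i hui hbi
  exact (real_inner_le_norm _ _).trans
    (mul_le_mul hbi hui (norm_nonneg _) ((norm_nonneg _).trans hbi))

theorem inner_sub_sub_nonneg_of_limsup_inner_le [l.NeBot] {x y : E}
    (hu : ∀ g, Tendsto (fun i ↦ ⟪u i, g⟫) l (𝓝 ⟪U, g⟫))
    (hb : ∀ g, Tendsto (fun i ↦ ⟪b i, g⟫) l (𝓝 ⟪B, g⟫))
    (hlimsup : limsup (fun i ↦ ⟪b i, u i⟫) l ≤ ⟪B, U⟫)
    (hmono : ∀ᶠ i in l, 0 ≤ ⟪b i - y, u i - x⟫) :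
    0 ≤ ⟪B - y, U - x⟫ := by
  have hlin : Tendsto (fun i ↦ ⟪b i, x⟫ + ⟪u i, y⟫ - ⟪y, x⟫) l
      (𝓝 (⟪B, x⟫ + ⟪U, y⟫ - ⟪y, x⟫)) :=
    ((hb x).add (hu y)).sub_const _
  have hle : ∀ᶠ i in l, ⟪b i, x⟫ + ⟪u i, y⟫ - ⟪y, x⟫ ≤ ⟪b i, u i⟫ := by
    filter_upwards [hmono] with i hi
    simp only [inner_sub_left, inner_sub_right, real_inner_comm (u i) y] at hi
    linarith
  have hlim : ⟪B, x⟫ + ⟪U, y⟫ - ⟪y, x⟫ ≤ ⟪B, U⟫ :=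
    hlin.limsup_eq ▸ (limsup_le_limsup hle hlin.isBoundedUnder_ge.isCoboundedUnder_le
      (isBoundedUnder_inner_of_tendsto_inner hu hb)).trans hlimsup
  simp only [inner_sub_left, inner_sub_right, real_inner_comm U y]
  linarith

end WeakConvergence

theorem Monotone.exists_lipschitzWith_resolvent {β : ℝ → ℝ} (hβc : Continuous β)
    (hβ : Monotone β) : ∃ r : ℝ → ℝ, LipschitzWith 1 r ∧ ∀ t, r t + β (r t) = t := by
  set f : ℝ → ℝ := fun t ↦ t + β t
  have hanti : AntilipschitzWith 1 f := AntilipschitzWith.of_le_mul_dist fun a b ↦ by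
    have := (monovary_id_iff.2 hβ).sub_mul_sub_nonneg b a
    simp only [Real.dist_eq, NNReal.coe_one, one_mul, f, id] at this ⊢
    exact sq_le_sq.1 (by nlinarith)
  have htop : Tendsto f atTop atTop := by
    refine tendsto_atTop_mono' _ ?_ (tendsto_atTop_add_const_right _ (β 0) tendsto_id)
    filter_upwards [eventually_ge_atTop 0] with t ht using add_le_add_right (hβ ht) t
  have hbot : Tendsto f atBot atBot := by
    refine tendsto_atBot_mono' _ ?_ (tendsto_atBot_add_const_right _ (β 0) tendsto_id)
    filter_upwards [eventually_le_atBot 0] with t ht using add_le_add_right (hβ ht) t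
  have hsurj := (continuous_id.add hβc).surjective htop hbot
  exact ⟨Function.surjInv hsurj, hanti.to_rightInverse (Function.rightInverse_surjInv hsurj),
    Function.surjInv_eq hsurj⟩

theorem LipschitzWith.comp_memLp_of_isFiniteMeasure {α E F : Type*} [MeasurableSpace α]
    {μ : Measure α} [IsFiniteMeasure μ] [NormedAddCommGroup E] [NormedAddCommGroup F]
    {p : ENNReal} {K : NNReal} {f : α → E} {g : E → F} (hg : LipschitzWith K g)
    (hf : MemLp f p μ) : MemLp (g ∘ f) p μ := by
  have hg0 : LipschitzWith (K + 0) fun t ↦ g t - g 0 := hg.sub (LipschitzWith.const (g 0))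
  convert (hg0.comp_memLp (sub_self _) hf).add (memLp_const (g 0)) using 1
  ext; simp

namespace MeasureTheory

variable {α E : Type*} [MeasurableSpace α] {μ : Measure α} [NormedAddCommGroup E]
  {p : ENNReal} {f g : α → E}

open Classical in
noncomputable def toLpOrZero (p : ENNReal) (μ : Measure α) (f : α → E) : Lp E p μ :=
  if hf : MemLp f p μ then hf.toLp f else 0

theorem MemLp.toLpOrZero_eq (hf : MemLp f p μ) : toLpOrZero p μ f = hf.toLp f := by
  rw [toLpOrZero, dif_pos hf]

theorem MemLp.toLpOrZero_sub (hf : MemLp f p μ) (hg : MemLp g p μ) :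
    toLpOrZero p μ (f - g) = toLpOrZero p μ f - toLpOrZero p μ g := by
  rw [hf.toLpOrZero_eq, hg.toLpOrZero_eq, (hf.sub hg).toLpOrZero_eq, MemLp.toLp_sub]

theorem MemLp.ae_eq_of_toLpOrZero_eq (hf : MemLp f p μ) (hg : MemLp g p μ)
    (h : toLpOrZero p μ f = toLpOrZero p μ g) : f =ᵐ[μ] g := by
  rwa [hf.toLpOrZero_eq, hg.toLpOrZero_eq, MemLp.toLp_eq_toLp_iff] at h

variable {f g : α → ℝ}

theorem MemLp.inner_toLpOrZero (hf : MemLp f 2 μ) (g : Lp ℝ 2 μ) :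
    ⟪toLpOrZero 2 μ f, g⟫ = ∫ x, f x * g x ∂μ := by
  rw [hf.toLpOrZero_eq, L2.inner_def]
  refine integral_congr_ae ?_
  filter_upwards [hf.coeFn_toLp] with x hx
  simp [hx, mul_comm]

theorem MemLp.inner_toLpOrZero_toLpOrZero (hf : MemLp f 2 μ) (hg : MemLp g 2 μ) :
    ⟪toLpOrZero 2 μ f, toLpOrZero 2 μ g⟫ = ∫ x, f x * g x ∂μ := by
  rw [hf.inner_toLpOrZero, hg.toLpOrZero_eq]
  refine integral_congr_ae ?_
  filter_upwards [hg.coeFn_toLp] with x hx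
  rw [hx]

theorem tendsto_inner_toLpOrZero {ι : Type*} {l : Filter ι} {φ : ι → α → ℝ}
    (hφ : ∀ᶠ i in l, MemLp (φ i) 2 μ) (hf : MemLp f 2 μ)
    (h : ∀ g, MemLp g 2 μ →
      Tendsto (fun i ↦ ∫ x, φ i x * g x ∂μ) l (𝓝 (∫ x, f x * g x ∂μ)))
    (g : Lp ℝ 2 μ) :
    Tendsto (fun i ↦ ⟪toLpOrZero 2 μ (φ i), g⟫) l (𝓝 ⟪toLpOrZero 2 μ f, g⟫) := by
  rw [hf.inner_toLpOrZero]
  refine (h g (Lp.memLp g)).congr' ?_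
  filter_upwards [hφ] with i hi using (hi.inner_toLpOrZero g).symm

theorem Monotone.inner_toLpOrZero_comp_sub_nonneg {β : ℝ → ℝ} (hβ : Monotone β)
    (hf : MemLp f 2 μ) (hg : MemLp g 2 μ) (hβf : MemLp (fun x ↦ β (f x)) 2 μ)
    (hβg : MemLp (fun x ↦ β (g x)) 2 μ) :
    0 ≤ ⟪toLpOrZero 2 μ (fun x ↦ β (f x)) - toLpOrZero 2 μ (fun x ↦ β (g x)),
      toLpOrZero 2 μ f - toLpOrZero 2 μ g⟫ := by
  rw [← hβf.toLpOrZero_sub hβg, ← hf.toLpOrZero_sub hg,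
    (hβf.sub hβg).inner_toLpOrZero_toLpOrZero (hf.sub hg)]
  exact integral_nonneg fun x ↦ (monovary_id_iff.2 hβ).sub_mul_sub_nonneg (g x) (f x)

theorem Monotone.inner_sub_sub_nonneg_of_limsup_le {ι : Type*} {l : Filter ι} [l.NeBot]
    [l.IsCountablyGenerated] {β : ℝ → ℝ} (hβ : Monotone β) {φ : ι → α → ℝ} {ξ : α → ℝ}
    (hφ : ∀ᶠ i in l, MemLp (φ i) 2 μ) (hβφ : ∀ᶠ i in l, MemLp (fun x ↦ β (φ i x)) 2 μ)
    (hf : MemLp f 2 μ) (hξ : MemLp ξ 2 μ)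
    (hφf : ∀ g, MemLp g 2 μ →
      Tendsto (fun i ↦ ∫ x, φ i x * g x ∂μ) l (𝓝 (∫ x, f x * g x ∂μ)))
    (hβφξ : ∀ g, MemLp g 2 μ →
      Tendsto (fun i ↦ ∫ x, β (φ i x) * g x ∂μ) l (𝓝 (∫ x, ξ x * g x ∂μ)))
    (hlimsup : limsup (fun i ↦ ∫ x, β (φ i x) * φ i x ∂μ) l ≤ ∫ x, ξ x * f x ∂μ)
    (hg : MemLp g 2 μ) (hβg : MemLp (fun x ↦ β (g x)) 2 μ) :
    0 ≤ ⟪toLpOrZero 2 μ ξ - toLpOrZero 2 μ (fun x ↦ β (g x)),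
      toLpOrZero 2 μ f - toLpOrZero 2 μ g⟫ := by
  refine inner_sub_sub_nonneg_of_limsup_inner_le (tendsto_inner_toLpOrZero hφ hf hφf)
    (tendsto_inner_toLpOrZero hβφ hξ hβφξ) ?_ ?_
  · rw [hξ.inner_toLpOrZero_toLpOrZero hf]
    refine (limsup_congr ?_).trans_le hlimsup
    filter_upwards [hφ, hβφ] with i hi hβi using hβi.inner_toLpOrZero_toLpOrZero hi
  · filter_upwards [hφ, hβφ] with i hi hβi
    exact hβ.inner_toLpOrZero_comp_sub_nonneg hi hg hβi hβg

end MeasureTheory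

theorem maximal_monotone_weak_closure {Ω : Type*} [MeasurableSpace Ω] (μ : Measure Ω)
    [IsFiniteMeasure μ] (β : ℝ → ℝ) (hβcont : Continuous β) (hβmono : Monotone β)
    (vlam : ℝ → Ω → ℝ) (v ξ : Ω → ℝ)
    (hvlam : ∀ lam ∈ Set.Ioi (0:ℝ), MemLp (vlam lam) 2 μ)
    (hβvlam : ∀ lam ∈ Set.Ioi (0:ℝ), MemLp (fun x => β (vlam lam x)) 2 μ)
    (hv : MemLp v 2 μ) (hξ : MemLp ξ 2 μ)
    (hweak1 : ∀ g : Ω → ℝ, MemLp g 2 μ →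
      Tendsto (fun lam => ∫ x, vlam lam x * g x ∂μ) (nhdsWithin 0 (Set.Ioi 0))
        (nhds (∫ x, v x * g x ∂μ)))
    (hweak2 : ∀ g : Ω → ℝ, MemLp g 2 μ →
      Tendsto (fun lam => ∫ x, β (vlam lam x) * g x ∂μ) (nhdsWithin 0 (Set.Ioi 0))
        (nhds (∫ x, ξ x * g x ∂μ)))
    (hlimsup : Filter.limsup (fun lam => ∫ x, β (vlam lam x) * vlam lam x ∂μ)
        (nhdsWithin 0 (Set.Ioi 0)) ≤ ∫ x, ξ x * v x ∂μ) :
    ∀ᵐ x ∂μ, ξ x = β (v x) := by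
  obtain ⟨r, hr, hrβ⟩ := hβmono.exists_lipschitzWith_resolvent hβcont
  set w : Ω → ℝ := fun x ↦ r (v x + ξ x)
  have hw : MemLp w 2 μ := hr.comp_memLp_of_isFiniteMeasure (hv.add hξ)
  have hβw_eq : (fun x ↦ β (w x)) = v + ξ - w := funext fun x ↦ by
    simp only [Pi.add_apply, Pi.sub_apply]; linarith [hrβ (v x + ξ x)]
  have hβw : MemLp (fun x ↦ β (w x)) 2 μ := hβw_eq ▸ (hv.add hξ).sub hw
  have hpos : ∀ᶠ lam in 𝓝[>] (0 : ℝ), lam ∈ Set.Ioi 0 := self_mem_nhdsWithin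
  have hminty := hβmono.inner_sub_sub_nonneg_of_limsup_le (hpos.mono hvlam)
    (hpos.mono hβvlam) hv hξ hweak1 hweak2 hlimsup hw hβw
  have hξ_sub : toLpOrZero 2 μ ξ - toLpOrZero 2 μ (fun x ↦ β (w x))
      = -(toLpOrZero 2 μ v - toLpOrZero 2 μ w) := by
    rw [neg_sub, ← hξ.toLpOrZero_sub hβw, ← hw.toLpOrZero_sub hv, hβw_eq]
    congr 1; abel
  rw [hξ_sub, inner_neg_left, neg_nonneg] at hminty
  have hvw : v =ᵐ[μ] w := hv.ae_eq_of_toLpOrZero_eq hw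
    (sub_eq_zero.1 (inner_self_eq_zero.1 (le_antisymm hminty real_inner_self_nonneg)))
  filter_upwards [hvw] with x hx
  have h : w x + β (w x) = v x + ξ x := hrβ _
  rw [← hx] at h
  linarith
end
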